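/- Let K_v = 𝔽((t)) and n ≥ 1. Every ω ∈ Ω¹_{K_v} decomposes uniquely as ω = β + r^{p^n} t^{p^n} dlog(t) with β ∈ B_{n,K_v} and r ∈ K_v; i.e. Ω¹_{K_v} = B_{n,K_v} ⊕ {r^{p^n} t^{p^n} dlog(t) : r ∈ K_v} as K_v^{p^n}-vector spaces. In particular B_{n,K_v} has codimension 1 over K_v^{p^n} (dimension p^n − 1 inside the p^n-dimensional space Ω¹_{K_v}). -/

import Mathlib

/-- The variable `t` of the Laurent series field `𝔽((t))`. -/
noncomputable def lsVar (𝔽 : Type*) [Field 𝔽] : LaurentSeries 𝔽 := HahnSeries.single (1 : ℤ) 1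

open HahnSeries Finset

section
variable {p : ℕ} [Fact p.Prime] {𝔽 : Type*} [Field 𝔽] [CharP 𝔽 p]

local notation "K" => LaurentSeries 𝔽

instance : CharP (LaurentSeries 𝔽) p := charP_of_injective_algebraMap (algebraMap 𝔽 (LaurentSeries 𝔽)).injective p

lemma intCast_pow_p (m : ℤ) : ((m : 𝔽)) ^ p = (m : 𝔽) := by
  have h := map_intCast (frobenius 𝔽 p) m
  rw [frobenius_def] at h
  exact h

lemma zsmul_pow_p (m : ℤ) (x : 𝔽) : (m • x) ^ p = m • x ^ p := by
  rw [zsmul_eq_mul, zsmul_eq_mul, mul_pow, intCast_pow_p]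

lemma zsmul_pow_pk (k : ℕ) (m : ℤ) (x : 𝔽) : (m • x) ^ p ^ k = m • x ^ p ^ k := by
  induction k with
  | zero => simp
  | succ k ih => rw [pow_succ, pow_mul, ih, zsmul_pow_p, ← pow_mul, ← pow_succ]

lemma mul_coeff_eq_zero {x y : K} {c d : ℤ} (hx : ∀ a, x.coeff a ≠ 0 → c ≤ a)
    (hy : ∀ b, y.coeff b ≠ 0 → d ≤ b) {i : ℤ} (hi : i < c + d) : (x * y).coeff i = 0 := by
  rw [HahnSeries.coeff_mul]
  apply Finset.sum_eq_zero
  intro ij hij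
  rw [Finset.mem_addAntidiagonal] at hij
  exact absurd (hij.2.2 ▸ add_le_add (hx _ hij.1) (hy _ hij.2.1)) (not_le.mpr hi)

lemma pow_coeff_bound {x : K} {c : ℤ} (hx : ∀ a, x.coeff a ≠ 0 → c ≤ a) (k : ℕ) :
    ∀ a, (x ^ k).coeff a ≠ 0 → (k : ℤ) * c ≤ a := by
  induction k with
  | zero =>
    intro a ha
    simp only [pow_zero, HahnSeries.coeff_one] at ha
    rcases eq_or_ne a 0 with rfl | h
    · simp
    · simp [h] at ha
  | succ k ih =>
    intro a ha
    by_contra hlt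
    push_cast at hlt
    rw [pow_succ] at ha
    refine ha (mul_coeff_eq_zero ih hx ?_)
    linarith [not_le.mp hlt]

variable (der : LaurentSeries 𝔽 → LaurentSeries 𝔽)
  (hder : ∀ (f : LaurentSeries 𝔽) (i : ℤ), (der f).coeff i = (i + 1) • f.coeff (i + 1))

include hder

lemma der_add (x y : K) : der (x + y) = der x + der y := by
  ext i
  simp [hder, smul_add]

lemma der_coeff_bound {x : K} {c : ℤ} (hx : ∀ a, x.coeff a ≠ 0 → c ≤ a) :
    ∀ a, (der x).coeff a ≠ 0 → c - 1 ≤ a := by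
  intro a ha
  rw [hder] at ha
  have : x.coeff (a + 1) ≠ 0 := fun h => ha (by simp [h])
  linarith [hx _ this]

lemma mul_der_coeff (x y : K) (N : ℤ) :
    (x * der y).coeff N =
      ∑ ij ∈ addAntidiagonal x.isPWO_support y.isPWO_support (N + 1),
        ij.2 • (x.coeff ij.1 * y.coeff ij.2) := by
  have hmono : Monotone (fun v : ℤ => v - 1) := fun _ _ h => sub_le_sub_right h 1
  have hs : ((fun v : ℤ => v - 1) '' y.support).IsPWO :=
    y.isPWO_support.image_of_monotone hmono
  have hsub : (der y).support ⊆ (fun v : ℤ => v - 1) '' y.support := by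
    intro v hv
    rw [HahnSeries.mem_support, hder] at hv
    have : y.coeff (v + 1) ≠ 0 := fun h => hv (by simp [h])
    exact ⟨v + 1, this, by ring⟩
  rw [HahnSeries.coeff_mul_right' hs hsub]
  refine Finset.sum_nbij' (fun ij => (ij.1, ij.2 + 1)) (fun ij => (ij.1, ij.2 - 1)) ?_ ?_ ?_ ?_ ?_
  · intro ij hij
    simp only [Finset.addAntidiagonal, Finset.mem_addAntidiagonal] at hij ⊢
    obtain ⟨v, hv, hveq⟩ := hij.2.1
    replace hveq : v - 1 = ij.2 := hveq
    refine ⟨hij.1, ?_, by omega⟩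
    have : ij.2 + 1 = v := by omega
    rwa [this]
  · intro ij hij
    simp only [Finset.addAntidiagonal, Finset.mem_addAntidiagonal] at hij ⊢
    exact ⟨hij.1, ⟨ij.2, hij.2.1, rfl⟩, by omega⟩
  · intro ij _; simp
  · intro ij _; simp
  · intro ij _
    simp only [hder]
    rw [mul_smul_comm]

lemma mul_der_coeff' (x y : K) (N : ℤ) :
    (y * der x).coeff N =
      ∑ ij ∈ addAntidiagonal x.isPWO_support y.isPWO_support (N + 1),
        ij.1 • (x.coeff ij.1 * y.coeff ij.2) := by
  have hmono : Monotone (fun v : ℤ => v - 1) := fun _ _ h => sub_le_sub_right h 1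
  have hs : ((fun v : ℤ => v - 1) '' x.support).IsPWO :=
    x.isPWO_support.image_of_monotone hmono
  have hsub : (der x).support ⊆ (fun v : ℤ => v - 1) '' x.support := by
    intro v hv
    rw [HahnSeries.mem_support, hder] at hv
    have : x.coeff (v + 1) ≠ 0 := fun h => hv (by simp [h])
    exact ⟨v + 1, this, by ring⟩
  rw [HahnSeries.coeff_mul_right' hs hsub]
  refine Finset.sum_nbij' (fun ij => (ij.2 + 1, ij.1)) (fun ij => (ij.2, ij.1 - 1)) ?_ ?_ ?_ ?_ ?_
  · intro ij hij
    simp only [Finset.addAntidiagonal, Finset.mem_addAntidiagonal] at hij ⊢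
    obtain ⟨v, hv, hveq⟩ := hij.2.1
    replace hveq : v - 1 = ij.2 := hveq
    refine ⟨?_, hij.1, by omega⟩
    have : ij.2 + 1 = v := by omega
    rwa [this]
  · intro ij hij
    simp only [Finset.addAntidiagonal, Finset.mem_addAntidiagonal] at hij ⊢
    exact ⟨hij.2.1, ⟨ij.1, hij.1, rfl⟩, by omega⟩
  · intro ij _; simp
  · intro ij _; simp
  · intro ij _
    simp only [hder]
    rw [mul_smul_comm, mul_comm (y.coeff ij.1)]

lemma der_mul (x y : K) : der (x * y) = x * der y + y * der x := by
  ext N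
  rw [HahnSeries.coeff_add, hder, HahnSeries.coeff_mul, Finset.smul_sum,
    mul_der_coeff der hder, mul_der_coeff' der hder, ← Finset.sum_add_distrib]
  apply Finset.sum_congr rfl
  intro ij hij
  rw [Finset.mem_addAntidiagonal] at hij
  rw [← hij.2.2, add_smul, add_comm]

lemma der_pow (x : K) (m : ℕ) (hm : 1 ≤ m) :
    der (x ^ m) = m • (x ^ (m - 1) * der x) := by
  induction m with
  | zero => omega
  | succ m ih =>
    rcases Nat.lt_or_ge 0 m with h | h
    · have hm1 : 1 ≤ m := h
      have h2 : m - 1 + 1 = m := by omega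
      rw [pow_succ, der_mul der hder, ih hm1, mul_smul_comm, ← mul_assoc, ← pow_succ', h2,
        Nat.add_sub_cancel, succ_nsmul, add_comm]
    · have : m = 0 := by omega
      subst this
      simp


omit hder

lemma coeff_sum {ι : Type*} (s : Finset ι) (f : ι → K) (N : ℤ) :
    (∑ i ∈ s, f i).coeff N = ∑ i ∈ s, (f i).coeff N := by
  classical
  induction s using Finset.induction_on with
  | empty => simp
  | insert _ _ ha ih => rw [Finset.sum_insert ha, Finset.sum_insert ha, HahnSeries.coeff_add, ih]

lemma lsVar_inv : (lsVar 𝔽)⁻¹ = single (-1 : ℤ) 1 := by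
  refine inv_eq_of_mul_eq_one_right ?_
  rw [lsVar, HahnSeries.single_mul_single, mul_one]
  norm_num [HahnSeries.single_zero_one]

lemma mul_lsVar_inv_coeff (x : K) (N : ℤ) : (x * (lsVar 𝔽)⁻¹).coeff N = x.coeff (N + 1) := by
  rw [lsVar_inv]
  have := HahnSeries.coeff_mul_single_add (r := (1:𝔽)) (x := x) (a := N + 1) (b := -1)
  simpa using this

lemma lsVar_mul_coeff (x : K) (N : ℤ) : (lsVar 𝔽 * x).coeff N = x.coeff (N - 1) := by
  rw [lsVar]
  have := HahnSeries.coeff_single_mul_add (r := (1:𝔽)) (x := x) (a := N - 1) (b := 1)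
  simpa using this

lemma mul_lsVar_coeff (x : K) (N : ℤ) : (x * lsVar 𝔽).coeff N = x.coeff (N - 1) := by
  rw [mul_comm, lsVar_mul_coeff]

/-- Truncation of a Laurent series at exponent `B` (keeping exponents `≤ B`). -/
noncomputable def trunc (x : K) (B : ℤ) : K where
  coeff i := if i ≤ B then x.coeff i else 0
  isPWO_support' := x.isPWO_support.mono (by
    intro i hi
    simp only [Function.mem_support] at hi
    by_cases h : i ≤ B
    · rw [if_pos h] at hi; exact hi
    · rw [if_neg h] at hi; exact absurd rfl hi)

lemma trunc_coeff (x : K) (B i : ℤ) : (trunc x B).coeff i = if i ≤ B then x.coeff i else 0 := rfl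

lemma sub_trunc_bound (x : K) (B : ℤ) : ∀ a, (x - trunc x B).coeff a ≠ 0 → B + 1 ≤ a := by
  intro a ha
  rw [HahnSeries.coeff_sub, trunc_coeff] at ha
  by_cases h : a ≤ B
  · rw [if_pos h, sub_self] at ha; exact absurd rfl ha
  · omega

lemma trunc_support_finite (x : K) (B : ℤ) : (trunc x B).support.Finite := by
  rcases eq_or_ne x 0 with rfl | hx
  · refine Set.Finite.subset (Set.finite_empty) ?_
    intro i hi
    rw [HahnSeries.mem_support, trunc_coeff] at hi
    simp at hi
  · refine Set.Finite.subset (Set.finite_Icc x.order B) ?_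
    intro i hi
    rw [HahnSeries.mem_support, trunc_coeff] at hi
    by_cases h : i ≤ B
    · rw [if_pos h] at hi
      exact Set.mem_Icc.2 ⟨HahnSeries.order_le_of_coeff_ne_zero hi, h⟩
    · rw [if_neg h] at hi; exact absurd rfl hi

lemma pow_p_coeff_single (a : ℤ) (c : 𝔽) (i : ℤ) :
    ((single a c : K) ^ p).coeff i = if (p:ℤ) ∣ i then ((single a c : K).coeff (i / (p:ℤ))) ^ p else 0 := by
  have hp : (0:ℤ) < (p:ℤ) := by exact_mod_cast (Fact.out : p.Prime).pos
  rw [HahnSeries.single_pow, nsmul_eq_mul, HahnSeries.coeff_single]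
  by_cases h : i = (p:ℤ) * a
  · subst h
    rw [if_pos rfl, if_pos ⟨a, rfl⟩, Int.mul_ediv_cancel_left _ hp.ne',
      HahnSeries.coeff_single_same]
  · rw [if_neg h]
    by_cases hd : (p:ℤ) ∣ i
    · obtain ⟨m, rfl⟩ := hd
      rw [if_pos ⟨m, rfl⟩, Int.mul_ediv_cancel_left _ hp.ne', HahnSeries.coeff_single,
        if_neg (fun he => h (by rw [he])), zero_pow (Fact.out : p.Prime).ne_zero]
    · rw [if_neg hd]

lemma pow_p_coeff (x : K) (i : ℤ) :
    (x ^ p).coeff i = if (p:ℤ) ∣ i then (x.coeff (i / (p:ℤ))) ^ p else 0 := by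
  classical
  have hp : (0:ℤ) < (p:ℤ) := by exact_mod_cast (Fact.out : p.Prime).pos
  have hadd : ∀ y z : K,
      (∀ j, (y ^ p).coeff j = if (p:ℤ) ∣ j then (y.coeff (j / (p:ℤ))) ^ p else 0) →
      (∀ j, (z ^ p).coeff j = if (p:ℤ) ∣ j then (z.coeff (j / (p:ℤ))) ^ p else 0) →
      ∀ j, ((y + z) ^ p).coeff j = if (p:ℤ) ∣ j then ((y+z).coeff (j / (p:ℤ))) ^ p else 0 := by
    intro y z hy hz j
    rw [add_pow_char, HahnSeries.coeff_add, hy j, hz j, HahnSeries.coeff_add]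
    by_cases hd : (p:ℤ) ∣ j
    · rw [if_pos hd, if_pos hd, if_pos hd, add_pow_char]
    · rw [if_neg hd, if_neg hd, if_neg hd, add_zero]
  have Hfin : ∀ (s : Finset ℤ) (y : K), y.support ⊆ ↑s →
      ∀ j, (y ^ p).coeff j = if (p:ℤ) ∣ j then (y.coeff (j / (p:ℤ))) ^ p else 0 := by
    intro s
    induction s using Finset.induction_on with
    | empty =>
      intro y hy j
      have : y = 0 := HahnSeries.support_eq_empty_iff.mp (by simpa using hy)
      subst this
      rw [zero_pow (Fact.out : p.Prime).ne_zero]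
      simp [zero_pow (Fact.out : p.Prime).ne_zero]
    | @insert a s ha ih =>
      intro y hy j
      have hsplit : y = single a (y.coeff a) + (y - single a (y.coeff a)) := by ring
      have hsub : (y - single a (y.coeff a)).support ⊆ ↑s := by
        intro b hb
        rw [HahnSeries.mem_support, HahnSeries.coeff_sub, HahnSeries.coeff_single] at hb
        by_cases hba : b = a
        · subst hba; rw [if_pos rfl, sub_self] at hb; exact absurd rfl hb
        · rw [if_neg hba, sub_zero] at hb
          have := hy hb
          simp only [Finset.coe_insert, Set.mem_insert_iff] at this
          rcases this with h | h
          · exact absurd h hba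
          · exact h
      rw [hsplit]
      exact hadd _ _ (pow_p_coeff_single a (y.coeff a)) (ih _ hsub) j
  set B := max i (max (i / (p:ℤ)) 0) with hB
  have hPg : x = trunc x B + (x - trunc x B) := by ring
  have hPfin := trunc_support_finite x B
  have hP := Hfin hPfin.toFinset (trunc x B) (by simp)
  have hg0 : ((x - trunc x B) ^ p).coeff i = 0 := by
    by_contra hne
    have hb := pow_coeff_bound (sub_trunc_bound x B) p i hne
    have h2 : i ≤ B := by rw [hB]; exact le_max_left _ _
    have h1 : (0:ℤ) ≤ B + 1 := by rw [hB]; have := le_max_right i (max (i / (p:ℤ)) 0); omega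
    have hp1 : (1:ℤ) ≤ (p:ℤ) := by exact_mod_cast (Fact.out : p.Prime).one_le
    have h3 : (1:ℤ) * (B+1) ≤ (p:ℤ) * (B+1) := mul_le_mul_of_nonneg_right hp1 h1
    linarith
  rw [hPg, add_pow_char, HahnSeries.coeff_add, hg0, add_zero, hP i]
  by_cases hd : (p:ℤ) ∣ i
  · rw [if_pos hd, if_pos hd, HahnSeries.coeff_add, trunc_coeff, coeff_sub, trunc_coeff]
    have hle : i / (p:ℤ) ≤ B := by rw [hB]; exact le_max_of_le_right (le_max_left _ _)
    simp only [if_pos hle]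
    ring
  · rw [if_neg hd, if_neg hd]


include hder

lemma der_coeff_vanish (x : K) (N : ℤ) (hN : (p:ℤ) ∣ N + 1) : (der x).coeff N = 0 := by
  rw [hder, zsmul_eq_mul, (CharP.intCast_eq_zero_iff 𝔽 p _).2 hN, zero_mul]

lemma der_single (a : ℤ) (c : 𝔽) : der (single a c : K) = single (a-1) (a • c) := by
  ext i
  rw [hder, HahnSeries.coeff_single, HahnSeries.coeff_single]
  by_cases h : i = a - 1
  · subst h
    rw [if_pos (by ring), if_pos rfl, sub_add_cancel]
  · rw [if_neg (by omega), if_neg h, smul_zero]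

lemma ml1_single (a : ℤ) (c : 𝔽) (N : ℤ) :
    ((single a c : K) ^ (p-1) * der (single a c)).coeff N
      = ((lsVar 𝔽 * der (single a c)) ^ p * (lsVar 𝔽)⁻¹).coeff N := by
  have hp1 : 1 ≤ p := (Fact.out : p.Prime).one_le
  rw [der_single der hder]
  have e1 : (single a c : K) ^ (p-1) * single (a-1) (a • c)
      = single ((p:ℤ)*a - 1) (a • c ^ p) := by
    rw [HahnSeries.single_pow, HahnSeries.single_mul_single, nsmul_eq_mul]
    congr 1
    · push_cast [Nat.cast_sub hp1]
      ring
    · rw [mul_smul_comm, ← pow_succ, Nat.sub_add_cancel hp1]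
  have e2 : lsVar 𝔽 * single (a-1) (a • c) = single a (a • c) := by
    rw [lsVar, HahnSeries.single_mul_single, one_mul]
    congr 1
    ring
  have e3 : (single a (a • c) : K) ^ p = single ((p:ℤ)*a) (a • c ^ p) := by
    rw [HahnSeries.single_pow, nsmul_eq_mul, zsmul_pow_p]
  rw [e1, e2, e3, lsVar_inv, HahnSeries.single_mul_single, mul_one,
    show (p:ℤ)*a + -1 = (p:ℤ)*a - 1 from by ring]

lemma ml1_tail_left (g : K) (c : ℤ) (hc : ∀ a, g.coeff a ≠ 0 → c ≤ a) (N : ℤ)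
    (hN : N < (p:ℤ)*c - 1) : (g ^ (p-1) * der g).coeff N = 0 := by
  have hp1 : 1 ≤ p := (Fact.out : p.Prime).one_le
  refine mul_coeff_eq_zero (pow_coeff_bound hc (p-1)) (der_coeff_bound der hder hc) ?_
  have : (((p-1 : ℕ)):ℤ) = (p:ℤ) - 1 := by push_cast [Nat.cast_sub hp1]; ring
  rw [this]
  linarith

lemma ml1_tail_right (g : K) (c : ℤ) (hc : ∀ a, g.coeff a ≠ 0 → c ≤ a) (N : ℤ)
    (hN : N < (p:ℤ)*c - 1) : ((lsVar 𝔽 * der g) ^ p * (lsVar 𝔽)⁻¹).coeff N = 0 := by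
  have hTd : ∀ a, (lsVar 𝔽 * der g).coeff a ≠ 0 → c ≤ a := by
    intro a ha
    rw [lsVar_mul_coeff] at ha
    have := der_coeff_bound der hder hc _ ha
    omega
  rw [mul_lsVar_inv_coeff]
  by_contra hne
  have := pow_coeff_bound hTd p _ hne
  omega

lemma quasi_add (N : ℤ) (hN : (p:ℤ) ∣ N + 1) (F G : K) :
    ((F+G) ^ (p-1) * der (F+G)).coeff N
      = (F ^ (p-1) * der F).coeff N + (G ^ (p-1) * der G).coeff N := by
  have hp1 : 1 ≤ p := (Fact.out : p.Prime).one_le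
  have hrange : p - 1 + 1 = p := Nat.sub_add_cancel hp1
  have key : ∀ (a : ℕ) (x : K), F ^ a * G ^ (p-1-a) * (((p-1).choose a : ℕ) : K) * x
      = (((p-1).choose a : ℕ) : 𝔽) • (F ^ a * G ^ (p-1-a) * x) := by
    intro a x
    rw [← HahnSeries.C_mul_eq_smul, ← map_natCast (HahnSeries.C : 𝔽 →+* K)]
    ring
  have hser : (F+G) ^ (p-1) * der (F+G)
      = ∑ a ∈ Finset.range p, (((p-1).choose a : ℕ) : 𝔽) • (F ^ a * G ^ (p-1-a) * der F)
        + ∑ a ∈ Finset.range p, (((p-1).choose a : ℕ) : 𝔽) • (F ^ a * G ^ (p-1-a) * der G) := by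
    rw [der_add der hder, add_pow, hrange, Finset.sum_mul, ← Finset.sum_add_distrib]
    apply Finset.sum_congr rfl
    intro a _
    rw [mul_add, key, key]
  rw [hser, HahnSeries.coeff_add, _root_.coeff_sum, _root_.coeff_sum]
  simp only [HahnSeries.coeff_smul]
  rw [← hrange, Finset.sum_range_succ, Finset.sum_range_succ']
  simp only [Nat.add_sub_cancel]
  rw [Nat.choose_self, Nat.sub_self, Nat.choose_zero_right, Nat.sub_zero]
  simp only [pow_zero, one_mul, mul_one, Nat.cast_one, one_smul]
  have hzero : ∀ b ∈ Finset.range (p-1),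
      (((p-1).choose b : ℕ):𝔽) • (F ^ b * G ^ (p-1-b) * der F).coeff N
        + (((p-1).choose (b+1) : ℕ):𝔽) • (F ^ (b+1) * G ^ (p-1-(b+1)) * der G).coeff N = 0 := by
    intro b hb
    rw [Finset.mem_range] at hb
    set Xc := (F ^ b * G ^ (p-1-b) * der F).coeff N with hXc
    set Yc := (F ^ (b+1) * G ^ (p-1-(b+1)) * der G).coeff N with hYc
    have e : der (F^(b+1) * G^(p-1-b))
        = (p-1-b : ℕ) • (F^(b+1) * G^(p-1-(b+1)) * der G)
          + (b+1 : ℕ) • (F^b * G^(p-1-b) * der F) := by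
      rw [der_mul der hder, der_pow der hder G (p-1-b) (by omega),
        der_pow der hder F (b+1) (by omega)]
      have h1 : p - 1 - b - 1 = p - 1 - (b+1) := by omega
      have h2 : b + 1 - 1 = b := by omega
      rw [h1, h2, mul_smul_comm, mul_smul_comm]
      congr 1
      · congr 1; ring
      · congr 1; ring
    have h0 := der_coeff_vanish der hder (F^(b+1) * G^(p-1-b)) N hN
    rw [e, HahnSeries.coeff_add, ← Nat.cast_smul_eq_nsmul 𝔽, ← Nat.cast_smul_eq_nsmul 𝔽,
      HahnSeries.coeff_smul, HahnSeries.coeff_smul, ← hXc, ← hYc, smul_eq_mul, smul_eq_mul] at h0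
    have hb1 : ((b+1 : ℕ):𝔽) ≠ 0 := by
      intro hz
      rw [CharP.cast_eq_zero_iff 𝔽 p (b+1)] at hz
      have h3 := Nat.le_of_dvd (Nat.succ_pos b) hz
      have hp2 : 2 ≤ p := (Fact.out : p.Prime).two_le
      omega
    have hid : (((p-1).choose (b+1) * (b+1) : ℕ):𝔽) = (((p-1).choose b * (p-1-b) : ℕ):𝔽) := by
      rw [Nat.choose_succ_right_eq]
    rw [Nat.cast_mul, Nat.cast_mul] at hid
    apply mul_left_cancel₀ hb1
    rw [mul_zero, smul_eq_mul, smul_eq_mul]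
    linear_combination ((((p-1).choose b : ℕ)):𝔽) * h0 + Yc * hid
  have hsum : ∑ b ∈ Finset.range (p-1),
        (((p-1).choose b : ℕ):𝔽) • (F ^ b * G ^ (p-1-b) * der F).coeff N
      + ∑ b ∈ Finset.range (p-1),
        (((p-1).choose (b+1) : ℕ):𝔽) • (F ^ (b+1) * G ^ (p-1-(b+1)) * der G).coeff N = 0 := by
    rw [← Finset.sum_add_distrib]
    exact Finset.sum_eq_zero hzero
  linear_combination hsum


omit hder in
lemma support_sub_single {y : K} {a : ℤ} {s : Finset ℤ} (hy : y.support ⊆ ↑(insert a s)) :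
    (y - single a (y.coeff a)).support ⊆ ↑s := by
  intro b hb
  rw [HahnSeries.mem_support, HahnSeries.coeff_sub, HahnSeries.coeff_single] at hb
  by_cases hba : b = a
  · subst hba; rw [if_pos rfl, sub_self] at hb; exact absurd rfl hb
  · rw [if_neg hba, sub_zero] at hb
    have h2 := hy hb
    simp only [Finset.coe_insert, Set.mem_insert_iff] at h2
    rcases h2 with h | h
    · exact absurd h hba
    · exact h

lemma der_zero : der (0 : K) = 0 := by
  ext i; rw [hder]; simp

lemma ml1 (N : ℤ) (hN : (p:ℤ) ∣ N + 1) (F : K) :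
    (F ^ (p-1) * der F).coeff N = ((lsVar 𝔽 * der F) ^ p * (lsVar 𝔽)⁻¹).coeff N := by
  classical
  have hRadd : ∀ x y : K, (lsVar 𝔽 * der (x+y))^p * (lsVar 𝔽)⁻¹
      = (lsVar 𝔽 * der x)^p * (lsVar 𝔽)⁻¹ + (lsVar 𝔽 * der y)^p * (lsVar 𝔽)⁻¹ := by
    intro x y
    rw [der_add der hder, mul_add, add_pow_char, add_mul]
  have hadd : ∀ x y : K,
      (x ^ (p-1) * der x).coeff N = ((lsVar 𝔽 * der x) ^ p * (lsVar 𝔽)⁻¹).coeff N →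
      (y ^ (p-1) * der y).coeff N = ((lsVar 𝔽 * der y) ^ p * (lsVar 𝔽)⁻¹).coeff N →
      ((x+y) ^ (p-1) * der (x+y)).coeff N
        = ((lsVar 𝔽 * der (x+y)) ^ p * (lsVar 𝔽)⁻¹).coeff N := by
    intro x y hx hy
    rw [quasi_add der hder N hN, hx, hy, hRadd, HahnSeries.coeff_add]
  have Hfin : ∀ (s : Finset ℤ) (y : K), y.support ⊆ ↑s →
      (y ^ (p-1) * der y).coeff N = ((lsVar 𝔽 * der y) ^ p * (lsVar 𝔽)⁻¹).coeff N := by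
    intro s
    induction s using Finset.induction_on with
    | empty =>
      intro y hy
      have h0 : y = 0 := HahnSeries.support_eq_empty_iff.mp (by simpa using hy)
      subst h0
      rw [der_zero der hder, mul_zero, mul_zero, zero_pow (Fact.out : p.Prime).ne_zero,
        zero_mul]
    | @insert a s ha ih =>
      intro y hy
      have hsplit : y = single a (y.coeff a) + (y - single a (y.coeff a)) := by ring
      rw [hsplit]
      exact hadd _ _ (ml1_single der hder a (y.coeff a) N) (ih _ (support_sub_single hy))
  have hp2 : 2 ≤ p := (Fact.out : p.Prime).two_le
  set B := max N 0 with hB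
  have hgb : ∀ a, (F - trunc F B).coeff a ≠ 0 → B + 1 ≤ a := sub_trunc_bound F B
  have hFsplit : F = trunc F B + (F - trunc F B) := by ring
  have hPfin := trunc_support_finite F B
  have hNlt : N < (p:ℤ)*(B+1) - 1 := by
    have h0 : (0:ℤ) ≤ B := le_max_right _ _
    have h1 : N ≤ B := le_max_left _ _
    have h2 : (2:ℤ) ≤ (p:ℤ) := by exact_mod_cast hp2
    nlinarith [mul_le_mul_of_nonneg_right h2 (by omega : (0:ℤ) ≤ B+1)]
  rw [hFsplit, quasi_add der hder N hN, hRadd, HahnSeries.coeff_add,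
    Hfin hPfin.toFinset _ (by simp), ml1_tail_left der hder _ (B+1) hgb N hNlt,
    ml1_tail_right der hder _ (B+1) hgb N hNlt]

omit hder in
lemma c3 {x y y' : K} (hx : ∀ a, x.coeff a ≠ 0 → (p:ℤ) ∣ a)
    (hyy' : ∀ b, (p:ℤ) ∣ b + 1 → y.coeff b = y'.coeff b) {N : ℤ} (hN : (p:ℤ) ∣ N + 1) :
    (x * y).coeff N = (x * y').coeff N := by
  have h0 : (x * (y - y')).coeff N = 0 := by
    rw [HahnSeries.coeff_mul]
    apply Finset.sum_eq_zero
    intro ij hij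
    rw [Finset.mem_addAntidiagonal] at hij
    have h1 : (p:ℤ) ∣ ij.1 := hx _ hij.1
    have h2 : (p:ℤ) ∣ ij.2 + 1 := by
      have h3 := hij.2.2
      obtain ⟨u, hu⟩ := h1
      obtain ⟨v, hv⟩ := hN
      refine ⟨v - u, ?_⟩
      rw [mul_sub, ← hu, ← hv]
      omega
    rw [HahnSeries.coeff_sub, hyy' _ h2, sub_self, mul_zero]
  have h1 : x * y - x * y' = x * (y - y') := by ring
  have h2 : (x * y).coeff N - (x * y').coeff N = 0 := by
    rw [← HahnSeries.coeff_sub, h1, h0]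
  exact sub_eq_zero.mp h2

lemma mlk (k : ℕ) (N : ℤ) (hN : ((p:ℤ))^k ∣ N + 1) (F : K) :
    (F ^ (p^k - 1) * der F).coeff N
      = ((lsVar 𝔽 * der F) ^ (p^k) * (lsVar 𝔽)⁻¹).coeff N := by
  have hppos : 0 < p := (Fact.out : p.Prime).pos
  have hpz : (0:ℤ) < (p:ℤ) := by exact_mod_cast hppos
  induction k generalizing N with
  | zero =>
    simp only [pow_zero, pow_one]
    rw [Nat.sub_self, pow_zero, one_mul, mul_lsVar_inv_coeff, lsVar_mul_coeff]
    congr 1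
    ring
  | succ k ih =>
    have hpk1 : 1 ≤ p^k := Nat.one_le_pow _ _ hppos
    have hdvd1 : (p:ℤ) ∣ N + 1 := dvd_trans (dvd_pow_self (p:ℤ) (Nat.succ_ne_zero k)) hN
    obtain ⟨M, hM⟩ := id hdvd1
    have hMdvd : ((p:ℤ))^k ∣ M := by
      obtain ⟨v, hv⟩ := hN
      have h4 : (p:ℤ) * M = (p:ℤ) * ((p:ℤ)^k * v) := by rw [← hM, hv]; ring
      exact ⟨v, mul_left_cancel₀ hpz.ne' h4⟩
    have he : F ^ (p^(k+1) - 1) = (F ^ (p^k - 1))^p * F^(p-1) := by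
      rw [← pow_mul, ← _root_.pow_add]
      congr 1
      have h1 : p^(k+1) = p^k * p := pow_succ p k
      have h2 : (p^k - 1) * p = p^k * p - p := by rw [Nat.sub_mul, one_mul]
      have h3 : p ≤ p^k * p := Nat.le_mul_of_pos_left p hpk1
      omega
    have hAx : ∀ a, ((F ^ (p^k - 1))^p).coeff a ≠ 0 → (p:ℤ) ∣ a := by
      intro a ha
      by_contra hnd
      rw [pow_p_coeff, if_neg hnd] at ha
      exact ha rfl
    rw [he, mul_assoc]
    rw [c3 hAx (fun b hb => ml1 der hder b hb F) hdvd1]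
    have hcomb : (F ^ (p^k - 1))^p * ((lsVar 𝔽 * der F) ^ p * (lsVar 𝔽)⁻¹)
        = (lsVar 𝔽 * (F ^ (p^k - 1) * der F))^p * (lsVar 𝔽)⁻¹ := by
      rw [mul_pow, mul_pow]
      ring
    rw [hcomb, mul_lsVar_inv_coeff, mul_lsVar_inv_coeff, hM, pow_p_coeff, pow_succ, pow_mul,
      pow_p_coeff, if_pos ⟨M, hM ▸ rfl⟩, if_pos ⟨M, rfl⟩, Int.mul_ediv_cancel_left _ hpz.ne']
    rw [lsVar_mul_coeff]
    congr 1
    have h5 : (p:ℤ)^k ∣ (M - 1) + 1 := by rw [sub_add_cancel]; exact hMdvd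
    rw [ih (M-1) h5, mul_lsVar_inv_coeff, sub_add_cancel]


omit hder in
lemma pow_pk_coeff (x : K) (k : ℕ) (i : ℤ) :
    (x ^ p ^ k).coeff i = if ((p:ℤ))^k ∣ i then (x.coeff (i / (p:ℤ)^k)) ^ (p^k) else 0 := by
  have hpz : (0:ℤ) < (p:ℤ) := by exact_mod_cast (Fact.out : p.Prime).pos
  induction k generalizing i with
  | zero => simp
  | succ k ih =>
    rw [pow_succ, pow_mul, pow_p_coeff]
    by_cases hd : (p:ℤ) ∣ i
    · obtain ⟨m, rfl⟩ := hd
      rw [if_pos ⟨m, rfl⟩, Int.mul_ediv_cancel_left _ hpz.ne', ih m]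
      by_cases hdk : ((p:ℤ))^k ∣ m
      · rw [if_pos hdk, if_pos (by obtain ⟨u, rfl⟩ := hdk; exact ⟨u, by ring⟩),
          ← pow_mul, ← pow_succ]
        congr 2
        rw [pow_succ', Int.mul_ediv_mul_of_pos _ _ hpz]
      · rw [if_neg hdk, if_neg ?_, zero_pow (Fact.out : p.Prime).ne_zero]
        intro hc
        apply hdk
        obtain ⟨u, hu⟩ := hc
        refine ⟨u, mul_left_cancel₀ hpz.ne' ?_⟩
        rw [hu, pow_succ']
        ring
    · rw [if_neg hd, if_neg (fun hc => hd (dvd_trans (dvd_pow_self _ (Nat.succ_ne_zero k)) hc))]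

lemma slot_vanish (k : ℕ) (F : K) (N : ℤ) (hd : ((p:ℤ))^(k+1) ∣ N + 1) :
    (F ^ (p^k - 1) * der F).coeff N = 0 := by
  have hppos : 0 < p := (Fact.out : p.Prime).pos
  have hpz : (0:ℤ) < (p:ℤ) := by exact_mod_cast hppos
  have hdk : ((p:ℤ))^k ∣ N + 1 := dvd_trans (pow_dvd_pow _ (Nat.le_succ k)) hd
  rw [mlk der hder k N hdk F, mul_lsVar_inv_coeff, pow_pk_coeff, if_pos hdk]
  have hm : (p:ℤ) ∣ (N+1)/(p:ℤ)^k := by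
    obtain ⟨u, hu⟩ := hd
    refine ⟨u, ?_⟩
    rw [hu, show (p:ℤ)^(k+1) * u = (p:ℤ)^k * ((p:ℤ)*u) from by ring,
      Int.mul_ediv_cancel_left _ (pow_ne_zero k hpz.ne')]
  rw [lsVar_mul_coeff, hder, sub_add_cancel, zsmul_eq_mul,
    (CharP.intCast_eq_zero_iff 𝔽 p _).2 hm, zero_mul, zero_pow (pow_pos hppos k).ne']

lemma slot_match (k : ℕ) (F : K) (m : ℤ) :
    (F ^ (p^k - 1) * der F).coeff ((p:ℤ)^k * m - 1) = m • (F.coeff m) ^ (p^k) := by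
  have hpz : (0:ℤ) < (p:ℤ) := by exact_mod_cast (Fact.out : p.Prime).pos
  have hd : ((p:ℤ))^k ∣ ((p:ℤ)^k * m - 1) + 1 := ⟨m, by ring⟩
  rw [mlk der hder k _ hd F, mul_lsVar_inv_coeff, sub_add_cancel, pow_pk_coeff,
    if_pos ⟨m, rfl⟩, Int.mul_ediv_cancel_left _ (pow_ne_zero _ hpz.ne'), lsVar_mul_coeff,
    hder, sub_add_cancel, zsmul_pow_pk]

omit hder in
/-- Construct a Hahn series from a coefficient function supported inside a monotone image
of the support of an existing series. -/
lemma exists_hahn (g : ℤ → ℤ) (hg : Monotone g) (v : ℤ → 𝔽) (w : K)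
    (hv : ∀ s, v s ≠ 0 → ∃ i, w.coeff i ≠ 0 ∧ g i = s) : ∃ r : K, ∀ s, r.coeff s = v s := by
  refine ⟨⟨v, (w.isPWO_support.image_of_monotone hg).mono ?_⟩, fun s => rfl⟩
  intro s hs
  obtain ⟨i, hi, he⟩ := hv s hs
  exact ⟨i, hi, he⟩

end

section Root
variable {p : ℕ} [Fact p.Prime] {𝔽 : Type*} [Field 𝔽] [CharP 𝔽 p] [PerfectRing 𝔽 p]

/-- Iterated inverse Frobenius. -/
noncomputable def rootk (p : ℕ) [Fact p.Prime] {𝔽 : Type*} [Field 𝔽] [CharP 𝔽 p]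
    [PerfectRing 𝔽 p] (k : ℕ) (x : 𝔽) : 𝔽 := ((frobeniusEquiv 𝔽 p).symm)^[k] x

lemma rootk_pow (k : ℕ) (x : 𝔽) : (rootk p k x) ^ (p ^ k) = x := by
  induction k generalizing x with
  | zero => simp [rootk]
  | succ k ih =>
    rw [rootk, Function.iterate_succ_apply, pow_succ, pow_mul]
    have := ih ((frobeniusEquiv 𝔽 p).symm x)
    rw [rootk] at this
    rw [this]
    have h2 := frobenius_apply_frobeniusEquiv_symm (R := 𝔽) (p := p) (x := x)
    rwa [frobenius_def] at h2

lemma rootk_ne_zero {k : ℕ} {x : 𝔽} (h : rootk p k x ≠ 0) : x ≠ 0 := by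
  intro hx
  exact pow_ne_zero (p^k) h (by rw [rootk_pow, hx])

end Root


section Assemble
variable {p : ℕ} [Fact p.Prime] {𝔽 : Type*} [Field 𝔽] [CharP 𝔽 p] [PerfectRing 𝔽 p]
  (der : LaurentSeries 𝔽 → LaurentSeries 𝔽)
  (hder : ∀ (f : LaurentSeries 𝔽) (i : ℤ), (der f).coeff i = (i + 1) • f.coeff (i + 1))

local notation "K" => LaurentSeries 𝔽

include hder

lemma ex_aux (n : ℕ) : ∀ (u : K), (∀ N : ℤ, ((p:ℤ))^n ∣ N + 1 → u.coeff N = 0) →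
    ∃ F : Fin n → K, u = ∑ i : Fin n, (F i)^(p^(i:ℕ) - 1) * der (F i) := by
  have hpz : (0:ℤ) < (p:ℤ) := by exact_mod_cast (Fact.out : p.Prime).pos
  induction n with
  | zero =>
    intro u hu
    refine ⟨fun i => i.elim0, ?_⟩
    have h0 : u = 0 := by
      ext N
      rw [hu N (by norm_num)]
      simp
    rw [h0, Finset.univ_eq_empty, Finset.sum_empty]
  | succ j ih =>
    intro u hu
    have hwit : ∀ m, (if (p:ℤ) ∣ m then 0
        else rootk p j (((m : ℤ) : 𝔽)⁻¹ * u.coeff ((p:ℤ)^j * m - 1))) ≠ 0 →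
        ∃ i, u.coeff i ≠ 0 ∧ (i+1)/(p:ℤ)^j = m := by
      intro m hm
      by_cases hd : (p:ℤ) ∣ m
      · rw [if_pos hd] at hm; exact absurd rfl hm
      · rw [if_neg hd] at hm
        have h1 := rootk_ne_zero hm
        have h2 : u.coeff ((p:ℤ)^j * m - 1) ≠ 0 := fun h => h1 (by rw [h, mul_zero])
        refine ⟨(p:ℤ)^j * m - 1, h2, ?_⟩
        rw [show (p:ℤ)^j * m - 1 + 1 = (p:ℤ)^j * m from by ring,
          Int.mul_ediv_cancel_left _ (pow_ne_zero j hpz.ne')]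
    obtain ⟨G, hG⟩ := exists_hahn (fun i => (i+1)/(p:ℤ)^j)
      (fun a b h => Int.ediv_le_ediv (pow_pos hpz j) (by omega))
      (fun m => if (p:ℤ) ∣ m then 0
        else rootk p j (((m : ℤ) : 𝔽)⁻¹ * u.coeff ((p:ℤ)^j * m - 1))) u hwit
    have hmatch : ∀ N : ℤ, ((p:ℤ))^j ∣ N + 1 → (u - G ^ (p^j - 1) * der G).coeff N = 0 := by
      intro N hN
      rw [HahnSeries.coeff_sub]
      by_cases hN1 : ((p:ℤ))^(j+1) ∣ N + 1
      · rw [hu N hN1, slot_vanish der hder j G N hN1, sub_zero]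
      · obtain ⟨m, hm⟩ := hN
        have hNm : N = (p:ℤ)^j * m - 1 := by omega
        have hpm : ¬ (p:ℤ) ∣ m := by
          intro hdm
          obtain ⟨c, hc⟩ := hdm
          exact hN1 ⟨c, by rw [hm, hc]; ring⟩
        have hmF : ((m:ℤ):𝔽) ≠ 0 := fun h => hpm ((CharP.intCast_eq_zero_iff 𝔽 p m).1 h)
        rw [hNm, slot_match der hder j G m, hG, if_neg hpm, rootk_pow, zsmul_eq_mul,
          ← mul_assoc, mul_inv_cancel₀ hmF, one_mul, sub_self]
    obtain ⟨F', hF'⟩ := ih (u - G ^ (p^j - 1) * der G) hmatch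
    refine ⟨Fin.snoc F' G, ?_⟩
    rw [Fin.sum_univ_castSucc]
    simp only [Fin.snoc_castSucc, Fin.snoc_last, Fin.coe_castSucc, Fin.val_last]
    rw [← hF']
    ring

lemma main_statement (n : ℕ) (hn : 0 < n) (w : K) :
    ∃ (F : Fin n → K) (r : K),
      w = (∑ i : Fin n, (F i) ^ (p ^ (i : ℕ) - 1) * der (F i)) +
        r ^ (p ^ n) * (lsVar 𝔽) ^ (p ^ n) * (lsVar 𝔽)⁻¹ ∧
      ∀ (F' : Fin n → K) (r' : K),
        w = (∑ i : Fin n, (F' i) ^ (p ^ (i : ℕ) - 1) * der (F' i)) +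
          r' ^ (p ^ n) * (lsVar 𝔽) ^ (p ^ n) * (lsVar 𝔽)⁻¹ →
        r' = r ∧ (∑ i : Fin n, (F' i) ^ (p ^ (i : ℕ) - 1) * der (F' i)) =
          ∑ i : Fin n, (F i) ^ (p ^ (i : ℕ) - 1) * der (F i) := by
  classical
  have hpz : (0:ℤ) < (p:ℤ) := by exact_mod_cast (Fact.out : p.Prime).pos
  have hRcoeff : ∀ (ρ : K) (N : ℤ),
      (ρ ^ (p^n) * (lsVar 𝔽)^(p^n) * (lsVar 𝔽)⁻¹).coeff N
        = if ((p:ℤ))^n ∣ N + 1 then (ρ.coeff ((N+1)/(p:ℤ)^n - 1))^(p^n) else 0 := by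
    intro ρ N
    rw [show ρ ^ (p^n) * (lsVar 𝔽)^(p^n) = (ρ * lsVar 𝔽)^(p^n) from (mul_pow _ _ _).symm,
      mul_lsVar_inv_coeff, pow_pk_coeff]
    by_cases hd : ((p:ℤ))^n ∣ N + 1
    · rw [if_pos hd, if_pos hd, mul_lsVar_coeff]
    · rw [if_neg hd, if_neg hd]
  have hwit : ∀ s, rootk p n (w.coeff ((p:ℤ)^n * (s+1) - 1)) ≠ 0 →
      ∃ i, w.coeff i ≠ 0 ∧ (i+1)/(p:ℤ)^n - 1 = s := by
    intro s hs
    have h2 : w.coeff ((p:ℤ)^n * (s+1) - 1) ≠ 0 := rootk_ne_zero hs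
    refine ⟨(p:ℤ)^n * (s+1) - 1, h2, ?_⟩
    rw [show (p:ℤ)^n * (s+1) - 1 + 1 = (p:ℤ)^n * (s+1) from by ring,
      Int.mul_ediv_cancel_left _ (pow_ne_zero n hpz.ne')]
    ring
  obtain ⟨r, hr⟩ := exists_hahn (fun i => (i+1)/(p:ℤ)^n - 1)
    (fun a b h => sub_le_sub_right (Int.ediv_le_ediv (pow_pos hpz n) (by omega)) 1)
    (fun s => rootk p n (w.coeff ((p:ℤ)^n * (s+1) - 1))) w hwit
  have hwR : ∀ N : ℤ, ((p:ℤ))^n ∣ N + 1 →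
      (r ^ (p^n) * (lsVar 𝔽)^(p^n) * (lsVar 𝔽)⁻¹).coeff N = w.coeff N := by
    intro N hd
    rw [hRcoeff r N, if_pos hd, hr, rootk_pow]
    have h1 : (p:ℤ)^n * ((N+1)/(p:ℤ)^n) = N + 1 := Int.mul_ediv_cancel' hd
    rw [show (N+1)/(p:ℤ)^n - 1 + 1 = (N+1)/(p:ℤ)^n from by ring, h1,
      show N + 1 - 1 = N from by ring]
  obtain ⟨F, hF⟩ := ex_aux der hder n (w - r ^ (p^n) * (lsVar 𝔽)^(p^n) * (lsVar 𝔽)⁻¹)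
    (fun N hd => by rw [HahnSeries.coeff_sub, hwR N hd, sub_self])
  have hmain : w = (∑ i : Fin n, (F i) ^ (p ^ (i : ℕ) - 1) * der (F i)) +
      r ^ (p ^ n) * (lsVar 𝔽) ^ (p ^ n) * (lsVar 𝔽)⁻¹ := by
    rw [← hF]
    ring
  have huniq : ∀ (ρ : K) (FF : Fin n → K),
      w = (∑ i : Fin n, (FF i) ^ (p ^ (i : ℕ) - 1) * der (FF i)) +
        ρ ^ (p ^ n) * (lsVar 𝔽) ^ (p ^ n) * (lsVar 𝔽)⁻¹ →
      ∀ s : ℤ, w.coeff ((p:ℤ)^n*(s+1) - 1) = (ρ.coeff s)^(p^n) := by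
    intro ρ FF hw s
    have hd : ((p:ℤ))^n ∣ ((p:ℤ)^n*(s+1) - 1) + 1 := ⟨s+1, by ring⟩
    rw [hw, HahnSeries.coeff_add, _root_.coeff_sum, hRcoeff ρ _, if_pos hd]
    have hsum0 : ∀ i : Fin n, ((FF i)^(p^(i:ℕ) - 1) * der (FF i)).coeff ((p:ℤ)^n*(s+1) - 1) = 0 := by
      intro i
      refine slot_vanish der hder (i:ℕ) (FF i) _ (dvd_trans (pow_dvd_pow (p:ℤ) ?_) hd)
      exact i.isLt
    rw [Finset.sum_eq_zero (fun i _ => hsum0 i), zero_add,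
      show (p:ℤ)^n*(s+1) - 1 + 1 = (p:ℤ)^n * (s+1) from by ring,
      Int.mul_ediv_cancel_left _ (pow_ne_zero n hpz.ne'),
      show s + 1 - 1 = s from by ring]
  refine ⟨F, r, hmain, ?_⟩
  intro F' r' h'
  have hre : r' = r := by
    ext s
    have h1 := huniq r' F' h' s
    have h2 := huniq r F hmain s
    have h3 : (r'.coeff s - r.coeff s)^(p^n) = 0 := by
      rw [sub_pow_char_pow, ← h1, ← h2, sub_self]
    have h4 := pow_eq_zero_iff (pow_pos (Fact.out : p.Prime).pos n).ne' |>.1 h3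
    exact sub_eq_zero.mp h4
  refine ⟨hre, ?_⟩
  have h5 : (∑ i : Fin n, (F' i) ^ (p ^ (i : ℕ) - 1) * der (F' i)) +
        r ^ (p ^ n) * (lsVar 𝔽) ^ (p ^ n) * (lsVar 𝔽)⁻¹
      = (∑ i : Fin n, (F i) ^ (p ^ (i : ℕ) - 1) * der (F i)) +
        r ^ (p ^ n) * (lsVar 𝔽) ^ (p ^ n) * (lsVar 𝔽)⁻¹ := by
    rw [hre] at h'
    rw [← h', ← hmain]
  exact add_right_cancel h5

end Assemble


/-- Let `K_v = 𝔽((t))` with `𝔽` a perfect field of characteristic `p`, with formal derivative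
`der` (1-forms `w·dt` identified with `w ∈ K_v`), and let `n ≥ 1`.  Every `ω ∈ Ω¹_{K_v}`
decomposes uniquely as `ω = β + r^{p^n} t^{p^n} dlog(t)` with
`β = d F₁ + F₂^{p-1} d F₂ + ⋯ + F_n^{p^{n-1}-1} d F_n ∈ B_{n,K_v}` and `r ∈ K_v`;
i.e. `Ω¹_{K_v} = B_{n,K_v} ⊕ {r^{p^n} t^{p^n} dlog(t)}` (uniqueness of `r` and of `β`). -/
theorem laurent_Bn_complement (p n : ℕ) [Fact p.Prime] (hn : 0 < n)
    (𝔽 : Type*) [Field 𝔽] [CharP 𝔽 p] [PerfectRing 𝔽 p]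
    (der : LaurentSeries 𝔽 → LaurentSeries 𝔽)
    (hder : ∀ (f : LaurentSeries 𝔽) (i : ℤ), (der f).coeff i = (i + 1) • f.coeff (i + 1))
    (w : LaurentSeries 𝔽) :
    ∃ (F : Fin n → LaurentSeries 𝔽) (r : LaurentSeries 𝔽),
      w = (∑ i : Fin n, (F i) ^ (p ^ (i : ℕ) - 1) * der (F i)) +
        r ^ (p ^ n) * (lsVar 𝔽) ^ (p ^ n) * (lsVar 𝔽)⁻¹ ∧
      ∀ (F' : Fin n → LaurentSeries 𝔽) (r' : LaurentSeries 𝔽),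
        w = (∑ i : Fin n, (F' i) ^ (p ^ (i : ℕ) - 1) * der (F' i)) +
          r' ^ (p ^ n) * (lsVar 𝔽) ^ (p ^ n) * (lsVar 𝔽)⁻¹ →
        r' = r ∧ (∑ i : Fin n, (F' i) ^ (p ^ (i : ℕ) - 1) * der (F' i)) =
          ∑ i : Fin n, (F i) ^ (p ^ (i : ℕ) - 1) * der (F i) := by
  exact main_statement der hder n hn w
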